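/- Let p ≥ 2, let r ≥ 1, and let w = α·((σ_1⋯σ_{p-1})^p)^r with α a positive braid word on p strands. Let π be the underlying permutation of w, and let O, O' be two distinct orbits of π with |O| = a and |O'| = b. Then the total number of crossings in w between strands of O and strands of O' is at least 2rab; hence the linking number of the two corresponding components of the closure of w is at least rab. -/
import Mathlib


open scoped Classical

/-- The orbit of `x` under a permutation `π`: `{π^n x : n ∈ ℤ}`. -/
def permOrbit {α : Type*} (π : Equiv.Perm α) (x : α) : Set α := {y | π.SameCycle x y}

/-- The number of orbits of a permutation. -/
noncomputable def orbitCount {α : Type*} (π : Equiv.Perm α) : ℕ :=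
  (Set.range (permOrbit π)).ncard

/-- The transposition of adjacent positions `i`, `i+1` (0-indexed) on `Fin p`,
corresponding to the braid letter `σ_{i+1}`; identity if out of range. -/
def stepPerm (p i : ℕ) : Equiv.Perm (Fin p) :=
  if h : i + 1 < p then Equiv.swap ⟨i, Nat.lt_of_succ_lt h⟩ ⟨i + 1, h⟩ else 1

/-- Position-tracking: `posAfter p w t` is the position function after the first
`t` letters of the positive braid word `w` (letter `i` denotes `σ_{i+1}`). -/
def posAfter (p : ℕ) (w : List ℕ) (t : ℕ) : Equiv.Perm (Fin p) :=
  ((w.take t).map (stepPerm p)).foldl (fun a g => g * a) 1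

/-- The underlying permutation of a positive braid word. -/
def permOf (p : ℕ) (w : List ℕ) : Equiv.Perm (Fin p) := posAfter p w w.length

/-- The number of letters of `w` at which strands `s` and `s'` cross. -/
def crossCount (p : ℕ) (w : List ℕ) (s s' : Fin p) : ℕ :=
  ((Finset.range w.length).filter fun t =>
    ({(posAfter p w t s).val, (posAfter p w t s').val} : Finset ℕ)
      = {w.getD t 0, w.getD t 0 + 1}).card

/-- Concatenation of `q` copies of the word `u`. -/
def wordPow (u : List ℕ) (q : ℕ) : List ℕ := (List.replicate q u).flatten

/-- The word `σ_1 σ_2 ⋯ σ_{m-1}` (0-indexed letters `0,…,m-2`). -/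
def ascBlock (m : ℕ) : List ℕ := List.range (m - 1)

/-- The full twist word `(σ_1 ⋯ σ_{p-1})^p` on `p` strands. -/
def fullTwistWord (p : ℕ) : List ℕ := wordPow (ascBlock p) p

/-- The orbit of `x` under `π`, as a finset. -/
noncomputable def orbitFinset (p : ℕ) (π : Equiv.Perm (Fin p)) (x : Fin p) : Finset (Fin p) :=
  Finset.univ.filter fun y => π.SameCycle x y

/-- Total number of crossings in `w` between the strands of the component of `s`
and the strands of the component of `s'` (components w.r.t. `π`). -/
noncomputable def crossBetween (p : ℕ) (w : List ℕ) (π : Equiv.Perm (Fin p))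
    (s s' : Fin p) : ℕ :=
  ∑ x ∈ orbitFinset p π s, ∑ y ∈ orbitFinset p π s', crossCount p w x y

/-- Linking number of the components of `s` and `s'` in the closure of the positive
braid word `w`: half the number of crossings between them. -/
noncomputable def linking (p : ℕ) (w : List ℕ) (π : Equiv.Perm (Fin p))
    (s s' : Fin p) : ℕ :=
  crossBetween p w π s s' / 2

/-- The 3-cycle `(0 1 2)` on `Fin N`, fixing all other points. -/
def tau3 (N : ℕ) (h : 3 ≤ N) : Equiv.Perm (Fin N) :=
  Equiv.swap ⟨0, by omega⟩ ⟨2, by omega⟩ * Equiv.swap ⟨0, by omega⟩ ⟨1, by omega⟩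

/-- `Fin s` is equivalent to the points of `Fin N` with value `< s`. -/
def subEquiv (s N : ℕ) (h : s ≤ N) : Fin s ≃ {x : Fin N // (x : ℕ) < s} where
  toFun x := ⟨⟨x, lt_of_lt_of_le x.2 h⟩, x.2⟩
  invFun y := ⟨(y.1 : ℕ), y.2⟩
  left_inv x := rfl
  right_inv y := rfl

/-- The permutation of `Fin N` acting as `x ↦ x + c (mod s)` on `{0,…,s-1}` and
fixing all points `≥ s`. -/
def tauShift (s c N : ℕ) (h : s ≤ N) : Equiv.Perm (Fin N) :=
  (finRotate s ^ c).extendDomain (subEquiv s N h)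

lemma wordPow_length (u : List ℕ) (q : ℕ) : (wordPow u q).length = q * u.length := by
  induction q with
  | zero => simp [wordPow]
  | succ n ih =>
    simp only [wordPow, List.replicate_succ, List.flatten_cons, List.length_append] at *
    rw [ih]; ring

lemma wordPow_succ (u : List ℕ) (q : ℕ) : wordPow u (q+1) = u ++ wordPow u q := by
  simp [wordPow, List.replicate_succ]

lemma wordPow_add (u : List ℕ) (a b : ℕ) :
    wordPow u (a + b) = wordPow u a ++ wordPow u b := by
  induction a with
  | zero => simp [wordPow]
  | succ n ih =>
    have : n + 1 + b = (n + b) + 1 := by ring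
    rw [this, wordPow_succ, ih, wordPow_succ]; simp

lemma wordPow_mul (u : List ℕ) (a b : ℕ) : wordPow (wordPow u a) b = wordPow u (b * a) := by
  induction b with
  | zero => simp [wordPow]
  | succ n ih =>
    rw [wordPow_succ, ih]
    have : (n+1) * a = a + n * a := by ring
    rw [this, wordPow_add]

lemma posAfter_succ (p : ℕ) (w : List ℕ) (t : ℕ) (ht : t < w.length) :
    posAfter p w (t+1) = stepPerm p (w.getD t 0) * posAfter p w t := by
  unfold posAfter
  have h1 : w.take (t+1) = w.take t ++ [w[t]] := by
    rw [List.take_succ]; simp [List.getElem?_eq_getElem ht]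
  rw [h1, List.map_append, List.foldl_append]
  simp [List.getD, List.getElem?_eq_getElem ht]

lemma wordPow_getD (u : List ℕ) (q k j : ℕ) (hk : k < q) (hj : j < u.length) :
    (wordPow u q).getD (k * u.length + j) 0 = u.getD j 0 := by
  induction k generalizing q with
  | zero =>
    obtain ⟨q', rfl⟩ : ∃ q', q = q' + 1 := ⟨q - 1, by omega⟩
    rw [wordPow_succ, show (0:ℕ)*u.length + j = j by ring, List.getD_append _ _ _ _ hj]
  | succ n ih =>
    obtain ⟨q', rfl⟩ : ∃ q', q = q' + 1 := ⟨q - 1, by omega⟩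
    rw [wordPow_succ]
    have : (n+1) * u.length + j = u.length + (n * u.length + j) := by ring
    rw [this]
    rw [List.getD_append_right _ _ _ _ (by omega)]
    have h2 : u.length + (n * u.length + j) - u.length = n * u.length + j := by omega
    rw [h2, ih q' (by omega)]

/-- Partial products of the ascending block. -/
def gseq (p : ℕ) : ℕ → Equiv.Perm (Fin p)
  | 0 => 1
  | j+1 => stepPerm p j * gseq p j

lemma gseq_val (p j : ℕ) (hj : j ≤ p - 1) (hp : 1 ≤ p) (u : Fin p) :
    ((gseq p j u : Fin p) : ℕ)
      = if (u : ℕ) = 0 then j else if (u : ℕ) ≤ j then (u : ℕ) - 1 else u := by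
  induction j with
  | zero =>
    simp only [gseq, Equiv.Perm.one_apply]
    split <;> rename_i h <;> [omega; (split <;> omega)]
  | succ n ih =>
    have hn1 : n + 1 < p := by omega
    have key := ih (by omega)
    simp only [gseq, Equiv.Perm.mul_apply]
    rw [stepPerm, dif_pos hn1]
    rcases eq_or_ne (u : ℕ) 0 with h0 | h0
    · rw [if_pos h0] at key ⊢
      have : gseq p n u = ⟨n, by omega⟩ := by
        apply Fin.ext; simpa using key
      rw [this, Equiv.swap_apply_left]
    · rw [if_neg h0] at key ⊢
      by_cases h1 : (u : ℕ) ≤ n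
      · rw [if_pos h1] at key
        rw [if_pos (by omega)]
        have : gseq p n u = ⟨(u:ℕ) - 1, by omega⟩ := by apply Fin.ext; simpa using key
        rw [this, Equiv.swap_apply_of_ne_of_ne] <;> simp [Fin.ext_iff] <;> omega
      · rw [if_neg h1] at key
        have hg : gseq p n u = ⟨(u:ℕ), u.2⟩ := by apply Fin.ext; simpa using key
        by_cases h2 : (u : ℕ) = n + 1
        · rw [if_pos (by omega)]
          rw [hg]
          have : (⟨(u:ℕ), u.2⟩ : Fin p) = ⟨n+1, hn1⟩ := by apply Fin.ext; simpa using h2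
          rw [this, Equiv.swap_apply_right]
          simp; omega
        · rw [if_neg (by omega), hg, Equiv.swap_apply_of_ne_of_ne] <;>
            simp [Fin.ext_iff] <;> omega

lemma twist_length (p q : ℕ) (α : List ℕ) :
    (α ++ wordPow (ascBlock p) q).length = α.length + q * (p-1) := by
  simp [wordPow_length, ascBlock]

lemma twist_getD (p q : ℕ) (α : List ℕ) (k j : ℕ) (hk : k < q) (hj : j < p - 1) :
    (α ++ wordPow (ascBlock p) q).getD (α.length + (k * (p-1) + j)) 0 = j := by
  rw [List.getD_append_right _ _ _ _ (by omega)]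
  have h1 : α.length + (k*(p-1)+j) - α.length = k*(p-1)+j := by omega
  rw [h1]
  have h2 : (ascBlock p).length = p - 1 := by simp [ascBlock]
  have h3 := wordPow_getD (ascBlock p) q k j hk (by omega)
  rw [h2] at h3; rw [h3]
  simp [ascBlock, List.getD, hj]

lemma pos_step (p q : ℕ) (α : List ℕ) (hp : 2 ≤ p) (k : ℕ) (hk : k < q) (j : ℕ) (hj : j ≤ p - 1) :
    posAfter p (α ++ wordPow (ascBlock p) q) (α.length + (k*(p-1) + j))
      = gseq p j * posAfter p (α ++ wordPow (ascBlock p) q) (α.length + k*(p-1)) := by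
  induction j with
  | zero => simp [gseq]
  | succ n ih =>
    have hlen : α.length + (k*(p-1)+n) < (α ++ wordPow (ascBlock p) q).length := by
      rw [twist_length]
      have h2 : (k+1)*(p-1) ≤ q*(p-1) := Nat.mul_le_mul_right _ (by omega)
      have h3 : k*(p-1) + (p-1) = (k+1)*(p-1) := by ring
      omega
    have h4 : α.length + (k*(p-1) + (n+1)) = (α.length + (k*(p-1)+n)) + 1 := by omega
    rw [h4, posAfter_succ _ _ _ hlen, twist_getD p q α k n hk (by omega), ih (by omega)]
    rw [show gseq p (n+1) = stepPerm p n * gseq p n from rfl, mul_assoc]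

lemma pos_block (p q : ℕ) (α : List ℕ) (hp : 2 ≤ p) (k : ℕ) (hk : k ≤ q) :
    posAfter p (α ++ wordPow (ascBlock p) q) (α.length + k*(p-1))
      = (gseq p (p-1))^k * posAfter p (α ++ wordPow (ascBlock p) q) α.length := by
  induction k with
  | zero => simp
  | succ n ih =>
    have h1 : α.length + (n+1)*(p-1) = α.length + (n*(p-1) + (p-1)) := by ring_nf
    rw [h1, pos_step p q α hp n (by omega) (p-1) le_rfl, ih (by omega), pow_succ', mul_assoc]

lemma delta_pow_val (p : ℕ) (hp : 2 ≤ p) (k : ℕ) (u : Fin p) :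
    ((((gseq p (p-1))^k) u : Fin p) : ℕ) = ((u:ℕ) + k*(p-1)) % p := by
  induction k generalizing u with
  | zero => simp [Nat.mod_eq_of_lt u.2]
  | succ n ih =>
    rw [pow_succ, Equiv.Perm.mul_apply, ih (gseq p (p-1) u)]
    have hval := gseq_val p (p-1) le_rfl (by omega) u
    have hu := u.2
    by_cases h0 : (u:ℕ) = 0
    · rw [hval, if_pos h0, h0]
      congr 1; ring
    · rw [hval, if_neg h0, if_pos (by omega)]
      have hB : (n+1)*(p-1) = n*(p-1) + (p-1) := by ring
      have h2 : (u:ℕ) + (n+1)*(p-1) = ((u:ℕ) - 1 + n*(p-1)) + p := by omega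
      rw [h2, Nat.add_mod_right]

lemma nat_block_inj {m k j k' j' : ℕ} (hj : j < m) (hj' : j' < m)
    (h : k*m + j = k'*m + j') : k = k' ∧ j = j' := by
  have hk : k = k' := by
    rcases lt_trichotomy k k' with h1 | h1 | h1
    · have h2 : (k+1)*m ≤ k'*m := Nat.mul_le_mul_right m h1
      have h3 : (k+1)*m = k*m + m := by ring
      omega
    · exact h1
    · have h2 : (k'+1)*m ≤ k*m := Nat.mul_le_mul_right m h1
      have h3 : (k'+1)*m = k'*m + m := by ring
      omega
  subst hk; omega

lemma crossCount_twist_le (p r : ℕ) (α : List ℕ) (hp : 2 ≤ p) (x y : Fin p) (hxy : x ≠ y) :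
    2 * r ≤ crossCount p (α ++ wordPow (fullTwistWord p) r) x y := by
  rcases Nat.eq_zero_or_pos r with rfl | hr
  · simp
  have hw : α ++ wordPow (fullTwistWord p) r = α ++ wordPow (ascBlock p) (r*p) := by
    rw [fullTwistWord, wordPow_mul]
  rw [hw]
  set q := r * p with hq
  set w := α ++ wordPow (ascBlock p) q with hwdef
  set L0 := α.length with hL0
  set ρ := posAfter p w L0 with hρ
  set δ := gseq p (p-1) with hδ
  classical
  set Z : ℕ → Fin p := fun n => if n % 2 = 0 then x else y with hZ
  set Z' : ℕ → Fin p := fun n => if n % 2 = 0 then y else x with hZ'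
  set K : ℕ → ℕ := fun n => (ρ (Z n) : ℕ) + (n / 2) * p with hK
  set J : ℕ → ℕ := fun n => (((δ ^ (K n)) (ρ (Z' n)) : Fin p) : ℕ) - 1 with hJ
  set T : ℕ → ℕ := fun n => L0 + ((K n) * (p-1) + (J n)) with hT
  have hZne : ∀ n, Z n ≠ Z' n := by
    intro n; simp only [hZ, hZ']; split
    · exact hxy
    · exact hxy.symm
  -- K n < q for n < 2r
  have hKlt : ∀ n, n < 2 * r → K n < q := by
    intro n hn
    have h1 : (ρ (Z n) : ℕ) < p := (ρ (Z n)).2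
    have h2 : (n / 2) * p ≤ (r - 1) * p := Nat.mul_le_mul_right p (by omega)
    have h3 : (r - 1) * p = r * p - p := by rw [Nat.sub_mul, one_mul]
    have h4 : p ≤ r * p := Nat.le_mul_of_pos_left p (by omega)
    simp only [hK]
    omega
  -- the strand Z n sits at position 0 at the start of block K n
  have hu0 : ∀ n, (((δ ^ K n) (ρ (Z n)) : Fin p) : ℕ) = 0 := by
    intro n
    rw [hδ, delta_pow_val p hp]
    obtain ⟨m, hm⟩ : ∃ m, p = m + 1 := ⟨p - 1, by omega⟩
    have hKn : K n = (ρ (Z n) : ℕ) + (n / 2) * p := rfl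
    have key : (ρ (Z n) : ℕ) + (K n) * (p - 1) = p * ((ρ (Z n) : ℕ) + (n/2) * (p-1)) := by
      rw [hKn]
      subst hm
      simp only [Nat.add_sub_cancel]
      ring
    rw [key, Nat.mul_mod_right]
  -- the other strand is at a nonzero position
  have hv1 : ∀ n, 1 ≤ (((δ ^ K n) (ρ (Z' n)) : Fin p) : ℕ) := by
    intro n
    have hne : (δ ^ K n) (ρ (Z' n)) ≠ (δ ^ K n) (ρ (Z n)) := by
      intro h
      exact hZne n (ρ.injective ((δ ^ K n).injective h)).symm
    have h0 := hu0 n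
    have : (((δ ^ K n) (ρ (Z' n)) : Fin p) : ℕ) ≠ 0 := by
      intro h
      exact hne (Fin.ext (by rw [h, h0]))
    omega
  have hvlt : ∀ n, (((δ ^ K n) (ρ (Z' n)) : Fin p) : ℕ) < p := fun n => ((δ ^ K n) (ρ (Z' n))).2
  have hJlt : ∀ n, J n < p - 1 := by
    intro n; have := hv1 n; have := hvlt n; simp only [hJ]; omega
  -- position formula at time T n
  have hpos : ∀ n, n < 2 * r →
      posAfter p w (T n) = gseq p (J n) * (δ ^ K n * ρ) := by
    intro n hn
    have h1 := pos_step p q α hp (K n) (hKlt n hn) (J n) (by have := hJlt n; omega)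
    have h2 := pos_block p q α hp (K n) (le_of_lt (hKlt n hn))
    rw [hT]
    rw [← hwdef] at h1 h2
    rw [h1, h2, hρ, hδ]
  -- letter at time T n
  have hletter : ∀ n, n < 2 * r → w.getD (T n) 0 = J n := by
    intro n hn
    exact twist_getD p q α (K n) (J n) (hKlt n hn) (hJlt n)
  -- length bound
  have hTlt : ∀ n, n < 2 * r → T n < w.length := by
    intro n hn
    rw [hwdef, twist_length]
    have h2 : (K n + 1)*(p-1) ≤ q*(p-1) := Nat.mul_le_mul_right _ (hKlt n hn)
    have h3 : (K n)*(p-1) + (p-1) = (K n + 1)*(p-1) := by ring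
    have := hJlt n
    simp only [hT]
    omega
  -- value of position of Z n and Z' n at time T n
  have hvalZ : ∀ n, n < 2 * r → ((posAfter p w (T n) (Z n) : Fin p) : ℕ) = J n := by
    intro n hn
    rw [hpos n hn]
    simp only [Equiv.Perm.mul_apply]
    rw [gseq_val p (J n) (by have := hJlt n; omega) (by omega)]
    rw [if_pos (hu0 n)]
  have hvalZ' : ∀ n, n < 2 * r → ((posAfter p w (T n) (Z' n) : Fin p) : ℕ) = J n + 1 := by
    intro n hn
    rw [hpos n hn]
    simp only [Equiv.Perm.mul_apply]
    rw [gseq_val p (J n) (by have := hJlt n; omega) (by omega)]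
    have h1 := hv1 n
    rw [if_neg (by omega), if_neg (by simp only [hJ]; omega)]
    simp only [hJ]; omega
  -- membership in the crossing filter
  set S := (Finset.range w.length).filter (fun t =>
    ({((posAfter p w t) x).val, ((posAfter p w t) y).val} : Finset ℕ)
      = {w.getD t 0, w.getD t 0 + 1}) with hS
  have hmem : ∀ n ∈ Finset.range (2*r), T n ∈ S := by
    intro n hn
    rw [Finset.mem_range] at hn
    rw [hS, Finset.mem_filter, Finset.mem_range]
    refine ⟨hTlt n hn, ?_⟩
    rw [hletter n hn]
    by_cases hpar : n % 2 = 0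
    · have hx' : Z n = x := by simp [hZ, hpar]
      have hy' : Z' n = y := by simp [hZ', hpar]
      rw [← hx', ← hy', hvalZ n hn, hvalZ' n hn]
    · have hx' : Z' n = x := by simp [hZ', hpar]
      have hy' : Z n = y := by simp [hZ, hpar]
      rw [← hx', ← hy', hvalZ n hn, hvalZ' n hn, Finset.pair_comm]
  have hinj : Set.InjOn T (Finset.range (2*r)) := by
    intro n hn n' hn' hTe
    rw [Finset.coe_range, Set.mem_Iio] at hn hn'
    have h1 : (K n) * (p-1) + J n = (K n') * (p-1) + J n' := by
      simp only [hT] at hTe; omega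
    obtain ⟨hKe, hJe⟩ := nat_block_inj (hJlt n) (hJlt n') h1
    have h2 : (n / 2) * p + (ρ (Z n) : ℕ) = (n' / 2) * p + (ρ (Z n') : ℕ) := by
      simp only [hK] at hKe; omega
    obtain ⟨hie, hre⟩ := nat_block_inj (ρ (Z n)).2 (ρ (Z n')).2 h2
    have hZZ : Z n = Z n' := ρ.injective (Fin.ext hre)
    have hpar : n % 2 = n' % 2 := by
      by_contra hc
      rcases Nat.mod_two_eq_zero_or_one n with h | h <;>
        rcases Nat.mod_two_eq_zero_or_one n' with h' | h' <;>
        simp [hZ, h, h'] at hZZ hc <;> exact hxy (by simp [hZZ])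
    omega
  have hcard : (Finset.range (2*r)).card ≤ S.card :=
    Finset.card_le_card_of_injOn T hmem hinj
  rw [Finset.card_range] at hcard
  exact hcard


/-- For `w = α·((σ_1⋯σ_{p-1})^p)^r` with `α` positive and `r ≥ 1`, and `π` the
underlying permutation of `w`: for any two distinct orbits (components), of sizes
`a` and `b`, the total number of crossings between their strands is at least `2rab`,
hence the linking number of the two components is at least `rab`. -/
theorem stmt15 (p r : ℕ) (α : List ℕ) (hp : 2 ≤ p) (hr : 1 ≤ r)
    (hα : ∀ i ∈ α, i + 1 < p) :
    let w := α ++ wordPow (fullTwistWord p) r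
    let π := permOf p w
    ∀ s s' : Fin p, ¬ π.SameCycle s s' →
      2 * r * (orbitFinset p π s).card * (orbitFinset p π s').card ≤
          crossBetween p w π s s' ∧
      r * (orbitFinset p π s).card * (orbitFinset p π s').card ≤
          linking p w π s s' := by
  intro w π s s' hss
  have key : ∀ x ∈ orbitFinset p π s, ∀ y ∈ orbitFinset p π s', 2 * r ≤ crossCount p w x y := by
    intro x hx y hy
    have hxy : x ≠ y := by
      rintro rfl
      rw [orbitFinset, Finset.mem_filter] at hx hy
      exact hss (hx.2.trans hy.2.symm)
    exact crossCount_twist_le p r α hp x y hxy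
  have h1 : 2 * r * (orbitFinset p π s).card * (orbitFinset p π s').card ≤
      crossBetween p w π s s' := by
    have h2 : ∑ x ∈ orbitFinset p π s, ∑ y ∈ orbitFinset p π s', 2 * r
        = 2 * r * (orbitFinset p π s).card * (orbitFinset p π s').card := by
      simp [Finset.sum_const, smul_eq_mul]
      ring
    rw [crossBetween, ← h2]
    exact Finset.sum_le_sum fun x hx => Finset.sum_le_sum fun y hy => key x hx y hy
  refine ⟨h1, ?_⟩
  rw [linking, Nat.le_div_iff_mul_le (by norm_num : 0 < 2)]
  calc r * (orbitFinset p π s).card * (orbitFinset p π s').card * 2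
      = 2 * r * (orbitFinset p π s).card * (orbitFinset p π s').card := by ring
    _ ≤ crossBetween p w π s s' := h1
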